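/- arXiv:1004.4788 — 5 statements merged into one kernel-verified Lean document; each statement's English description precedes it below -/
import Mathlib

section
/- For the root system Φ = {±θᵢ : 1≤i≤3} ∪ {±θᵢ±θⱼ : 1≤i<j≤3} of so(7,ℂ) and z = (k−l)θ₁ + (2k+l)θ₂ + (k+2l)θ₃ with k,l coprime integers, the set Φ' = {α ∈ Φ : ⟨α,z⟩ = 0} is: empty if k−l, 2k+l, k+2l are all nonzero and pairwise distinct in absolute value; equals {±(θ₁−θ₃)} if (k,l)=(1,0); and equals {±θ₁, ±(θ₂−θ₃)} if (k,l)=(1,1). -/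
/-- For the `B₃` root system `Φ = {±θᵢ} ∪ {±θᵢ±θⱼ, i<j}` of `so(7,ℂ)` and
`z = (k−l)θ₁ + (2k+l)θ₂ + (k+2l)θ₃` with `k, l` coprime integers, the subset
`Φ' = {α ∈ Φ | ⟨α, z⟩ = 0}` is empty in the generic case (the three coefficients
`k−l, 2k+l, k+2l` all nonzero and pairwise distinct in absolute value), equals
`{±(θ₁−θ₃)}` for `(k,l) = (1,0)`, and equals `{±θ₁, ±(θ₂−θ₃)}` for `(k,l) = (1,1)`. -/
theorem so7_roots_orthogonal_to_z (k l : ℤ) (hcop : IsCoprime k l) :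
    let θ : Fin 3 → (Fin 3 → ℤ) := fun i => Pi.single i 1
    let Φ : Set (Fin 3 → ℤ) :=
      {α | (∃ i, α = θ i ∨ α = -θ i) ∨
           (∃ i j, i < j ∧ (α = θ i + θ j ∨ α = θ i - θ j ∨
                            α = -θ i + θ j ∨ α = -θ i - θ j))}
    let z : Fin 3 → ℤ := ![k - l, 2*k + l, k + 2*l]
    let Φ' : Set (Fin 3 → ℤ) := {α ∈ Φ | α 0 * z 0 + α 1 * z 1 + α 2 * z 2 = 0}
    ((k - l ≠ 0 ∧ 2*k + l ≠ 0 ∧ k + 2*l ≠ 0 ∧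
      |k - l| ≠ |2*k + l| ∧ |k - l| ≠ |k + 2*l| ∧ |2*k + l| ≠ |k + 2*l|) →
        Φ' = ∅) ∧
    ((k = 1 ∧ l = 0) → Φ' = {θ 0 - θ 2, -(θ 0 - θ 2)}) ∧
    ((k = 1 ∧ l = 1) → Φ' = {θ 0, -θ 0, θ 1 - θ 2, -(θ 1 - θ 2)}) := by
  intro θ Φ z Φ'
  have hθ : ∀ i, θ i = ![if i = 0 then 1 else 0, if i = 1 then 1 else 0, if i = 2 then 1 else 0] := by
    intro i; ext j; fin_cases i <;> fin_cases j <;> simp [θ] <;> rfl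
  clear hcop
  refine ⟨?_, ?_, ?_⟩
  · rintro ⟨h1, h2, h3, h4, h5, h6⟩
    simp only [ne_eq, abs_eq_abs] at h4 h5 h6
    ext α
    simp only [Φ', Φ, z, Set.mem_setOf_eq, Set.mem_empty_iff_false, iff_false, not_and]
    rintro (⟨i, h | h⟩ | ⟨i, j, hij, (h | h | h | h)⟩) <;>
      subst h <;> fin_cases i <;> (try fin_cases j) <;> (try exact absurd hij (by decide)) <;>
      simp [hθ] <;> omega
  · rintro ⟨rfl, rfl⟩
    ext α
    simp only [Φ', Φ, z, Set.mem_setOf_eq, Set.mem_insert_iff, Set.mem_singleton_iff]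
    constructor
    · rintro ⟨(⟨i, h | h⟩ | ⟨i, j, hij, (h | h | h | h)⟩), hz⟩ <;>
        subst h <;> fin_cases i <;> (try fin_cases j) <;> (try exact absurd hij (by decide)) <;>
        simp [hθ, funext_iff, Fin.forall_fin_succ] at hz ⊢ <;> omega
    · rintro (rfl | rfl)
      · exact ⟨Or.inr ⟨0, 2, by decide, Or.inr (Or.inl rfl)⟩,
          by simp [hθ]⟩
      · exact ⟨Or.inr ⟨0, 2, by decide, Or.inr (Or.inr (Or.inl (by abel)))⟩,
          by simp [hθ]⟩
  · rintro ⟨rfl, rfl⟩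
    ext α
    simp only [Φ', Φ, z, Set.mem_setOf_eq, Set.mem_insert_iff, Set.mem_singleton_iff]
    constructor
    · rintro ⟨(⟨i, h | h⟩ | ⟨i, j, hij, (h | h | h | h)⟩), hz⟩ <;>
        subst h <;> fin_cases i <;> (try fin_cases j) <;> (try exact absurd hij (by decide)) <;>
        simp [hθ, funext_iff, Fin.forall_fin_succ] at hz ⊢ <;> omega
    · rintro (rfl | rfl | rfl | rfl)
      · exact ⟨Or.inl ⟨0, Or.inl rfl⟩, by simp [hθ]⟩
      · exact ⟨Or.inl ⟨0, Or.inr rfl⟩, by simp [hθ]⟩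
      · exact ⟨Or.inr ⟨1, 2, by decide, Or.inr (Or.inl rfl)⟩,
          by simp [hθ]⟩
      · exact ⟨Or.inr ⟨1, 2, by decide, Or.inr (Or.inr (Or.inl (by abel)))⟩,
          by simp [hθ]⟩
end

section
/- Let U(1)_{k,l} = {diag(e^{kit}, e^{lit}, e^{-i(k+l)t}) : t ∈ ℝ} ⊆ SU(3) with k, l coprime integers and k+l ≠ 0. Let SU(2) be embedded in SU(3) as the upper-left 2×2 block. Then SU(2) ∩ U(1)_{k,l} = {diag(e^{2πim/(k+l)}, e^{-2πim/(k+l)}, 1) : m ∈ ℤ}, a cyclic group of order |k+l|. -/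
open Matrix

/-- The embedding of a `2 × 2` matrix `A` into `3 × 3` matrices as the block
matrix `diag(A, 1)`. -/
noncomputable def su2emb (A : Matrix (Fin 2) (Fin 2) ℂ) : Matrix (Fin 3) (Fin 3) ℂ :=
  Matrix.of fun i j =>
    if hi : (i : ℕ) < 2 then
      (if hj : (j : ℕ) < 2 then A ⟨i, hi⟩ ⟨j, hj⟩ else 0)
    else (if (j : ℕ) < 2 then 0 else 1)

lemma diag3_congr (a b c d e f : ℂ) (h1 : a = d) (h2 : b = e) (h3 : c = f) :
    Matrix.diagonal ![a, b, c] = Matrix.diagonal ![d, e, f] := by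
  rw [h1, h2, h3]

lemma cancel_aux (c : ℂ) (hc : c ≠ 0) (u v : ℂ) (j : ℤ)
    (h : 2 * (Real.pi : ℂ) * u / c * Complex.I =
      2 * (Real.pi : ℂ) * v / c * Complex.I + j * (2 * Real.pi * Complex.I)) :
    u = v + j * c := by
  have hπ : (Real.pi : ℂ) ≠ 0 := by exact_mod_cast Real.pi_ne_zero
  have h2 : (2 * (Real.pi : ℂ) * Complex.I) * u = (2 * (Real.pi : ℂ) * Complex.I) * (v + j * c) := by
    field_simp at h
    linear_combination (2 * (Real.pi : ℂ) * Complex.I) * h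
  exact mul_left_cancel₀ (by simp [hπ, Complex.I_ne_zero]) h2

lemma su2emb_diag (a b : ℂ) : su2emb (Matrix.diagonal ![a, b]) = Matrix.diagonal ![a, b, 1] := by
  ext i j
  fin_cases i <;> fin_cases j <;> simp [su2emb, Matrix.diagonal]

lemma conj_exp_mul (y : ℂ) (hy : (starRingEnd ℂ) y = -y) :
    (starRingEnd ℂ) (Complex.exp y) * Complex.exp y = 1 := by
  rw [← Complex.exp_conj, hy, ← Complex.exp_add, neg_add_cancel, Complex.exp_zero]

lemma unit_diag (x : ℂ) (hx : (starRingEnd ℂ) x = x) :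
    (Matrix.diagonal ![Complex.exp (x * Complex.I), Complex.exp (-x * Complex.I)])ᴴ *
      (Matrix.diagonal ![Complex.exp (x * Complex.I), Complex.exp (-x * Complex.I)]) = 1 := by
  have h1 := conj_exp_mul (x * Complex.I) (by rw [_root_.map_mul, hx, Complex.conj_I]; ring)
  have h2 := conj_exp_mul (-(x * Complex.I)) (by rw [map_neg, _root_.map_mul, hx, Complex.conj_I]; ring)
  rw [Matrix.diagonal_conjTranspose, Matrix.diagonal_mul_diagonal, ← Matrix.diagonal_one]
  ext i j
  fin_cases i <;> fin_cases j <;> simp [Matrix.diagonal, h1, h2]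

lemma det_diag (x : ℂ) :
    (Matrix.diagonal ![Complex.exp (x * Complex.I), Complex.exp (-x * Complex.I)]).det = 1 := by
  simp [Matrix.det_fin_two, Matrix.diagonal, ← Complex.exp_add]

/-- Let `U(1)_{k,l} = {diag(e^{kit}, e^{lit}, e^{-i(k+l)t})} ⊆ SU(3)` with `k, l`
coprime and `k + l ≠ 0`, and let `SU(2)` be embedded as the upper-left block.
Then `SU(2) ∩ U(1)_{k,l} = {diag(e^{2πim/(k+l)}, e^{-2πim/(k+l)}, 1) : m ∈ ℤ}`,
a (cyclic) group with exactly `|k+l|` elements. -/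
theorem su2_inter_U1kl (k l : ℤ) (hcop : IsCoprime k l) (hkl : k + l ≠ 0) :
    let U1kl : Set (Matrix (Fin 3) (Fin 3) ℂ) :=
      {M | ∃ t : ℝ, M = Matrix.diagonal
        ![Complex.exp ((k : ℂ) * t * Complex.I), Complex.exp ((l : ℂ) * t * Complex.I),
          Complex.exp (-((k : ℂ) + l) * t * Complex.I)]}
    let SU2 : Set (Matrix (Fin 3) (Fin 3) ℂ) :=
      {M | ∃ A : Matrix (Fin 2) (Fin 2) ℂ, Aᴴ * A = 1 ∧ A.det = 1 ∧ M = su2emb A}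
    let Γ : Set (Matrix (Fin 3) (Fin 3) ℂ) :=
      {M | ∃ m : ℤ, M = Matrix.diagonal
        ![Complex.exp (2 * (Real.pi : ℂ) * m / ((k : ℂ) + l) * Complex.I),
          Complex.exp (-(2 * (Real.pi : ℂ) * m / ((k : ℂ) + l)) * Complex.I), 1]}
    SU2 ∩ U1kl = Γ ∧ Γ.ncard = (k + l).natAbs := by
  intro U1kl SU2 Γ
  have hπ : (Real.pi : ℂ) ≠ 0 := by exact_mod_cast Real.pi_ne_zero
  have hc : (k : ℂ) + l ≠ 0 := by
    have : ((k + l : ℤ) : ℂ) ≠ 0 := by exact_mod_cast hkl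
    push_cast at this; exact this
  constructor
  · ext M
    simp only [U1kl, SU2, Γ, Set.mem_inter_iff, Set.mem_setOf_eq]
    constructor
    · rintro ⟨⟨A, _, _, hMA⟩, ⟨t, hMt⟩⟩
      have h22 : Complex.exp (-((k : ℂ) + l) * t * Complex.I) = 1 := by
        have := congrFun (congrFun (hMA.symm.trans hMt) 2) 2
        simpa [su2emb, Matrix.diagonal] using this.symm
      obtain ⟨m, hm⟩ := Complex.exp_eq_one_iff.mp h22
      have ht : ((k : ℂ) + l) * t = -(2 * Real.pi * m) := by
        apply mul_right_cancel₀ Complex.I_ne_zero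
        linear_combination -hm
      refine ⟨-k * m, ?_⟩
      rw [hMt]
      apply diag3_congr
      · congr 1
        push_cast
        field_simp
        linear_combination (k : ℂ) * ht
      · rw [Complex.exp_eq_exp_iff_exists_int]
        refine ⟨-m, ?_⟩
        push_cast
        field_simp
        linear_combination (l : ℂ) * ht
      · exact h22
    · rintro ⟨m, hM⟩
      obtain ⟨a, b, hab⟩ : IsCoprime k (k + l) := by
        have := hcop.add_mul_right_right 1
        simpa [mul_one, add_comm] using this
      constructor
      · refine ⟨Matrix.diagonal ![Complex.exp (2 * (Real.pi : ℂ) * m / ((k : ℂ) + l) * Complex.I),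
          Complex.exp (-(2 * (Real.pi : ℂ) * m / ((k : ℂ) + l)) * Complex.I)], ?_, ?_, ?_⟩
        · exact unit_diag _ (by
            simp [map_div₀, _root_.map_mul, Complex.conj_ofReal, map_ofNat, map_intCast, map_add])
        · exact det_diag _
        · rw [hM, su2emb_diag]
      · refine ⟨2 * Real.pi * (m * a) / ((k : ℝ) + l), ?_⟩
        rw [hM]
        have habC : (a : ℂ) * k + b * ((k : ℂ) + l) = 1 := by exact_mod_cast congrArg (Int.cast : ℤ → ℂ) hab
        apply diag3_congr
        · rw [Complex.exp_eq_exp_iff_exists_int]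
          refine ⟨m * b, ?_⟩
          push_cast
          field_simp
          linear_combination (-(m : ℂ)) * habC
        · rw [Complex.exp_eq_exp_iff_exists_int]
          refine ⟨-(m * (a + b)), ?_⟩
          push_cast
          field_simp
          linear_combination (m : ℂ) * habC
        · rw [eq_comm, Complex.exp_eq_one_iff]
          refine ⟨-(m * a), ?_⟩
          push_cast
          field_simp
  · set N := (k + l).natAbs with hN
    haveI : NeZero N := ⟨Int.natAbs_ne_zero.mpr hkl⟩
    set g : ZMod N → Matrix (Fin 3) (Fin 3) ℂ := fun x => Matrix.diagonal
      ![Complex.exp (2 * (Real.pi : ℂ) * (x.val : ℂ) / ((k : ℂ) + l) * Complex.I),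
        Complex.exp (-(2 * (Real.pi : ℂ) * (x.val : ℂ) / ((k : ℂ) + l)) * Complex.I), 1]
      with hg
    have hΓ : Γ = Set.range g := by
      ext M
      constructor
      · rintro ⟨m, rfl⟩
        refine ⟨(m : ZMod N), ?_⟩
        have hd : ((N : ℤ)) ∣ m - (((m : ZMod N).val : ℤ)) := by
          rw [← ZMod.intCast_zmod_eq_zero_iff_dvd]
          push_cast [ZMod.natCast_val]
          simp
        obtain ⟨j, hj⟩ : (k + l) ∣ m - (((m : ZMod N).val : ℤ)) := Int.natAbs_dvd.mp hd
        simp only [hg]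
        obtain ⟨v, hv⟩ : ∃ v : ℕ, (m : ZMod N).val = v := ⟨_, rfl⟩
        rw [hv] at hj ⊢
        have hjC : (m : ℂ) = (v : ℂ) + j * ((k : ℂ) + l) := by
          have h' := congrArg (Int.cast : ℤ → ℂ) hj
          push_cast at h' ⊢
          linear_combination h'
        apply diag3_congr
        · rw [Complex.exp_eq_exp_iff_exists_int]
          refine ⟨-j, ?_⟩
          field_simp
          push_cast
          linear_combination -hjC
        · rw [Complex.exp_eq_exp_iff_exists_int]
          refine ⟨j, ?_⟩
          field_simp
          linear_combination hjC
        · rfl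
      · rintro ⟨x, rfl⟩
        refine ⟨(x.val : ℤ), ?_⟩
        rw [hg]
        push_cast
        rfl
    have hginj : Function.Injective g := by
      intro x y hxy
      have h0 := congrFun (congrFun hxy 0) 0
      rw [hg] at h0
      simp only [Matrix.diagonal_apply_eq, Matrix.cons_val_zero] at h0
      rw [Complex.exp_eq_exp_iff_exists_int] at h0
      obtain ⟨j, hj⟩ := h0
      have hC := cancel_aux ((k : ℂ) + l) hc _ _ j hj
      have hZ : (x.val : ℤ) = (y.val : ℤ) + j * (k + l) := by exact_mod_cast hC
      have hdvd : ((N : ℤ)) ∣ (y.val : ℤ) - (x.val : ℤ) :=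
        Int.natAbs_dvd.mpr ⟨-j, by linarith⟩
      have hxy2 : ((x.val : ℤ) : ZMod N) = ((y.val : ℤ) : ZMod N) :=
        (ZMod.intCast_eq_intCast_iff _ _ _).mpr (Int.modEq_iff_dvd.mpr hdvd)
      push_cast [ZMod.natCast_val, ZMod.cast_id] at hxy2
      exact hxy2
    rw [hΓ, ← Set.image_univ, Set.ncard_image_of_injective _ hginj, Set.ncard_univ, Nat.card_zmod]
end

section
/- Consider the ODE system: a₁'/a₁ = (b²+c²−a₁²)/(a₁bc) + 3(a₁²−a₂²)/(a₁a₂f) − f/(3a₁a₂), a₂'/a₂ = (b²+c²−a₂²)/(a₂bc) + 3(a₂²−a₁²)/(a₁a₂f) − f/(3a₁a₂), b'/b = ((a₁²+c²−b²)/(a₁bc) + (a₂²+c²−b²)/(a₂bc))/2 + f/(6b²), c'/c = ((a₁²+b²−c²)/(a₁bc) + (a₂²+b²−c²)/(a₂bc))/2 + f/(6c²), f'/f = −3(a₁−a₂)²/(a₁a₂f) + f/(3a₁a₂) − f/(6b²) − f/(6c²). If (a₁,a₂,b,c,f) is a solution, then t ↦ (−a₂(−t), −a₁(−t), b(−t),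 c(−t), −f(−t)) is also a solution. -/
/-- The system (HolRedN11) for parallel `Spin(7)`-structures with principal orbit
`N^{1,1}`. -/
def HolRedN11 (S : Set ℝ) (a₁ a₂ b c f : ℝ → ℝ) : Prop :=
  ∀ t ∈ S,
    DifferentiableAt ℝ a₁ t ∧ DifferentiableAt ℝ a₂ t ∧ DifferentiableAt ℝ b t ∧
    DifferentiableAt ℝ c t ∧ DifferentiableAt ℝ f t ∧
    deriv a₁ t / a₁ t = (b t ^ 2 + c t ^ 2 - a₁ t ^ 2) / (a₁ t * b t * c t)
      + 3 * (a₁ t ^ 2 - a₂ t ^ 2) / (a₁ t * a₂ t * f t) - f t / (3 * a₁ t * a₂ t) ∧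
    deriv a₂ t / a₂ t = (b t ^ 2 + c t ^ 2 - a₂ t ^ 2) / (a₂ t * b t * c t)
      + 3 * (a₂ t ^ 2 - a₁ t ^ 2) / (a₁ t * a₂ t * f t) - f t / (3 * a₁ t * a₂ t) ∧
    deriv b t / b t = ((a₁ t ^ 2 + c t ^ 2 - b t ^ 2) / (a₁ t * b t * c t)
      + (a₂ t ^ 2 + c t ^ 2 - b t ^ 2) / (a₂ t * b t * c t)) / 2 + f t / (6 * b t ^ 2) ∧
    deriv c t / c t = ((a₁ t ^ 2 + b t ^ 2 - c t ^ 2) / (a₁ t * b t * c t)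
      + (a₂ t ^ 2 + b t ^ 2 - c t ^ 2) / (a₂ t * b t * c t)) / 2 + f t / (6 * c t ^ 2) ∧
    deriv f t / f t = -(3 * (a₁ t - a₂ t) ^ 2 / (a₁ t * a₂ t * f t))
      + f t / (3 * a₁ t * a₂ t) - f t / (6 * b t ^ 2) - f t / (6 * c t ^ 2)

private lemma deriv_neg_comp_neg (g : ℝ → ℝ) (t : ℝ) :
    deriv (fun t => -g (-t)) t = deriv g (-t) := by
  have : deriv (fun t => -g (-t)) t = -deriv (fun t => g (-t)) t := by
    rw [← deriv.fun_neg]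
  rw [this, deriv_comp_neg, neg_neg]

/-- If `(a₁, a₂, b, c, f)` solves the system (HolRedN11) on an interval `I`
symmetric about `0`, on which all five functions are nowhere zero, then
`t ↦ (−a₂(−t), −a₁(−t), b(−t), c(−t), −f(−t))` is also a solution. -/
theorem holRedN11_symmetry (I : Set ℝ) (hsym : ∀ t ∈ I, -t ∈ I)
    (a₁ a₂ b c f : ℝ → ℝ)
    (hne : ∀ t ∈ I, a₁ t ≠ 0 ∧ a₂ t ≠ 0 ∧ b t ≠ 0 ∧ c t ≠ 0 ∧ f t ≠ 0)
    (hsol : HolRedN11 I a₁ a₂ b c f) :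
    HolRedN11 I (fun t => -a₂ (-t)) (fun t => -a₁ (-t)) (fun t => b (-t))
      (fun t => c (-t)) (fun t => -f (-t)) := by
  intro t ht
  obtain ⟨d1, d2, d3, d4, d5, e1, e2, e3, e4, e5⟩ := hsol (-t) (hsym t ht)
  have hneg : DifferentiableAt ℝ (fun x : ℝ => -x) t := differentiable_neg.differentiableAt
  refine ⟨(d2.comp t hneg).neg, (d1.comp t hneg).neg, d3.comp t hneg,
    d4.comp t hneg, (d5.comp t hneg).neg, ?_, ?_, ?_, ?_, ?_⟩
  · rw [deriv_neg_comp_neg a₂ t, div_neg, e2]; ring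
  · rw [deriv_neg_comp_neg a₁ t, div_neg, e1]; ring
  · rw [deriv_comp_neg, neg_div, e3]; ring
  · rw [deriv_comp_neg, neg_div, e4]; ring
  · rw [deriv_neg_comp_neg f t, div_neg, e5]; ring
end

section
/- Every Lie subalgebra k of su(3) with 2u(1) ⊆ k, where 2u(1) is the Cartan subalgebra of diagonal matrices, is one of: 2u(1) itself, 2u(1) ⊕ Vᵢ for some i ∈ {1,2,3} (isomorphic to u(2)), or su(3) itself. Here V₁, V₂, V₃ are the three root spaces (real 2-dimensional) corresponding to the pairs of roots ±α for the three positive roots of su(3). -/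
set_option linter.unreachableTactic false
set_option linter.unusedTactic false
set_option linter.unnecessarySeqFocus false


open Matrix

namespace Stmt15

/-- `su(3)`: traceless skew-Hermitian `3 × 3` complex matrices. -/
def su3 : Set (Matrix (Fin 3) (Fin 3) ℂ) := {x | xᴴ = -x ∧ x.trace = 0}

/-- `2u(1)`: the Cartan subalgebra of diagonal matrices in `su(3)`. -/
def diagCartan : Set (Matrix (Fin 3) (Fin 3) ℂ) := {x | x ∈ su3 ∧ x.IsDiag}

noncomputable def E (i j : Fin 3) : Matrix (Fin 3) (Fin 3) ℂ :=
  Matrix.single i j 1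

/-- The real root space `V₁ = span(E₁² − E₂¹, i E₁² + i E₂¹)`. -/
noncomputable def V1 : Set (Matrix (Fin 3) (Fin 3) ℂ) :=
  {x | ∃ α β : ℝ, x = α • (E 0 1 - E 1 0) + β • (Complex.I • (E 0 1 + E 1 0))}

/-- The real root space `V₂ = span(E₁³ − E₃¹, i E₁³ + i E₃¹)`. -/
noncomputable def V2 : Set (Matrix (Fin 3) (Fin 3) ℂ) :=
  {x | ∃ α β : ℝ, x = α • (E 0 2 - E 2 0) + β • (Complex.I • (E 0 2 + E 2 0))}

/-- The real root space `V₃ = span(E₂³ − E₃², i E₂³ + i E₃²)`. -/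
noncomputable def V3 : Set (Matrix (Fin 3) (Fin 3) ℂ) :=
  {x | ∃ α β : ℝ, x = α • (E 1 2 - E 2 1) + β • (Complex.I • (E 1 2 + E 2 1))}

/-- The sum of two subsets of matrices. -/
def sumSet (S T : Set (Matrix (Fin 3) (Fin 3) ℂ)) : Set (Matrix (Fin 3) (Fin 3) ℂ) :=
  {x | ∃ d ∈ S, ∃ v ∈ T, x = d + v}

-- auxiliary defs
noncomputable abbrev M3 := Matrix (Fin 3) (Fin 3) ℂ
noncomputable def HH1 : M3 := Matrix.diagonal ![Complex.I, -Complex.I, 0]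
noncomputable def HH2 : M3 := Matrix.diagonal ![Complex.I, 0, -Complex.I]
noncomputable def HH3 : M3 := Matrix.diagonal ![0, Complex.I, -Complex.I]
noncomputable def br (h x : M3) : M3 := h * x - x * h
noncomputable def q1 (x : M3) : M3 := Matrix.of ![![0, x 0 1, 0], ![x 1 0, 0, 0], ![0,0,0]]
noncomputable def q2 (x : M3) : M3 := Matrix.of ![![0, 0, x 0 2], ![0,0,0], ![x 2 0, 0, 0]]
noncomputable def q3 (x : M3) : M3 := Matrix.of ![![0,0,0], ![0, 0, x 1 2], ![0, x 2 1, 0]]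
noncomputable def dpart (x : M3) : M3 := Matrix.of ![![x 0 0,0,0],![0,x 1 1,0],![0,0,x 2 2]]
noncomputable def u1 : M3 := E 0 1 - E 1 0
noncomputable def w1 : M3 := Complex.I • (E 0 1 + E 1 0)
noncomputable def u2 : M3 := E 0 2 - E 2 0
noncomputable def w2 : M3 := Complex.I • (E 0 2 + E 2 0)
noncomputable def u3 : M3 := E 1 2 - E 2 1
noncomputable def w3 : M3 := Complex.I • (E 1 2 + E 2 1)

lemma HH1_mem : HH1 ∈ diagCartan := by
  refine ⟨⟨?_, ?_⟩, Matrix.isDiag_diagonal _⟩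
  · ext i j
    fin_cases i <;> fin_cases j <;>
      simp [HH1, Matrix.conjTranspose_apply, Matrix.diagonal]
  · rw [Matrix.trace_fin_three]; simp [HH1, Matrix.diagonal]

lemma HH2_mem : HH2 ∈ diagCartan := by
  refine ⟨⟨?_, ?_⟩, Matrix.isDiag_diagonal _⟩
  · ext i j
    fin_cases i <;> fin_cases j <;>
      simp [HH2, Matrix.conjTranspose_apply, Matrix.diagonal]
  · rw [Matrix.trace_fin_three]; simp [HH2, Matrix.diagonal]

lemma HH3_mem : HH3 ∈ diagCartan := by
  refine ⟨⟨?_, ?_⟩, Matrix.isDiag_diagonal _⟩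
  · ext i j
    fin_cases i <;> fin_cases j <;>
      simp [HH3, Matrix.conjTranspose_apply, Matrix.diagonal]
  · rw [Matrix.trace_fin_three]; simp [HH3, Matrix.diagonal]

lemma extract1 (x : M3) :
    q1 x = ((-1:ℝ)/3) • br HH1 (br HH1 x)
      + ((1:ℝ)/18) • (br HH1 (br HH1 x) + br HH2 (br HH2 x) + br HH3 (br HH3 x)) := by
  ext i j
  fin_cases i <;> fin_cases j <;>
    simp [q1, br, HH1, HH2, HH3, Matrix.diagonal_mul, Matrix.mul_diagonal,
      Complex.real_smul, Matrix.vecHead, Matrix.vecTail] <;>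
    (try ring_nf) <;> (try simp [Complex.I_sq, Matrix.vecHead, Matrix.vecTail]) <;> (try ring)

lemma extract2 (x : M3) :
    q2 x = ((-1:ℝ)/3) • br HH2 (br HH2 x)
      + ((1:ℝ)/18) • (br HH1 (br HH1 x) + br HH2 (br HH2 x) + br HH3 (br HH3 x)) := by
  ext i j
  fin_cases i <;> fin_cases j <;>
    simp [q2, br, HH1, HH2, HH3, Matrix.diagonal_mul, Matrix.mul_diagonal,
      Complex.real_smul, Matrix.vecHead, Matrix.vecTail] <;>
    (try ring_nf) <;> (try simp [Complex.I_sq, Matrix.vecHead, Matrix.vecTail]) <;> (try ring)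

lemma extract3 (x : M3) :
    q3 x = ((-1:ℝ)/3) • br HH3 (br HH3 x)
      + ((1:ℝ)/18) • (br HH1 (br HH1 x) + br HH2 (br HH2 x) + br HH3 (br HH3 x)) := by
  ext i j
  fin_cases i <;> fin_cases j <;>
    simp [q3, br, HH1, HH2, HH3, Matrix.diagonal_mul, Matrix.mul_diagonal,
      Complex.real_smul, Matrix.vecHead, Matrix.vecTail] <;>
    (try ring_nf) <;> (try simp [Complex.I_sq, Matrix.vecHead, Matrix.vecTail]) <;> (try ring)

lemma decomp (x : M3) : x = dpart x + q1 x + q2 x + q3 x := by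
  ext i j
  fin_cases i <;> fin_cases j <;> simp [dpart, q1, q2, q3, Matrix.vecHead, Matrix.vecTail]

lemma gen_u3 : (-1:ℝ) • (u1 * u2 - u2 * u1) = u3 := by
  ext i j
  fin_cases i <;> fin_cases j <;>
    simp [u1, u2, u3, E, Matrix.single, Matrix.mul_apply, Fin.sum_univ_three,
      Complex.real_smul] <;> (try ring_nf) <;> (try simp [Complex.I_sq, Matrix.vecHead, Matrix.vecTail]) <;> (try ring)

lemma gen_w3 : (-1:ℝ) • (u1 * w2 - w2 * u1) = w3 := by
  ext i j
  fin_cases i <;> fin_cases j <;>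
    simp [u1, w2, w3, E, Matrix.single, Matrix.mul_apply, Fin.sum_univ_three,
      Complex.real_smul] <;> (try ring_nf) <;> (try simp [Complex.I_sq, Matrix.vecHead, Matrix.vecTail]) <;> (try ring)

lemma gen_u2 : u1 * u3 - u3 * u1 = u2 := by
  ext i j
  fin_cases i <;> fin_cases j <;>
    simp [u1, u2, u3, E, Matrix.single, Matrix.mul_apply, Fin.sum_univ_three] <;>
    (try ring_nf) <;> (try simp [Complex.I_sq, Matrix.vecHead, Matrix.vecTail]) <;> (try ring)

lemma gen_w2 : u1 * w3 - w3 * u1 = w2 := by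
  ext i j
  fin_cases i <;> fin_cases j <;>
    simp [u1, w2, w3, E, Matrix.single, Matrix.mul_apply, Fin.sum_univ_three] <;>
    (try ring_nf) <;> (try simp [Complex.I_sq, Matrix.vecHead, Matrix.vecTail]) <;> (try ring)

lemma gen_u1 : (-1:ℝ) • (u2 * u3 - u3 * u2) = u1 := by
  ext i j
  fin_cases i <;> fin_cases j <;>
    simp [u1, u2, u3, E, Matrix.single, Matrix.mul_apply, Fin.sum_univ_three,
      Complex.real_smul] <;> (try ring_nf) <;> (try simp [Complex.I_sq, Matrix.vecHead, Matrix.vecTail]) <;> (try ring)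

lemma gen_w1 : u2 * w3 - w3 * u2 = w1 := by
  ext i j
  fin_cases i <;> fin_cases j <;>
    simp [u2, w1, w3, E, Matrix.single, Matrix.mul_apply, Fin.sum_univ_three] <;>
    (try ring_nf) <;> (try simp [Complex.I_sq, Matrix.vecHead, Matrix.vecTail]) <;> (try ring)



lemma skew (x : M3) (hx : xᴴ = -x) (i j : Fin 3) :
    x j i = -((x i j).re : ℂ) + ((x i j).im : ℂ) * Complex.I := by
  have h := congr_fun (congr_fun hx j) i
  simp only [Matrix.conjTranspose_apply, Matrix.neg_apply] at h
  have h2 : (starRingEnd ℂ) (x i j) = -x j i := h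
  rw [Complex.ext_iff] at h2
  simp only [Complex.conj_re, Complex.conj_im, Complex.neg_re, Complex.neg_im] at h2
  obtain ⟨ha, hb⟩ := h2
  apply Complex.ext <;> simp <;> linarith

lemma diag_imag (x : M3) (hx : xᴴ = -x) (i : Fin 3) :
    (starRingEnd ℂ) (x i i) = -x i i := by
  have h := congr_fun (congr_fun hx i) i
  simp only [Matrix.conjTranspose_apply, Matrix.neg_apply] at h
  exact h

lemma dpart_mem (x : M3) (hx : x ∈ su3) : dpart x ∈ diagCartan := by
  refine ⟨⟨?_, ?_⟩, ?_⟩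
  · ext i j
    fin_cases i <;> fin_cases j <;>
      simp [dpart, Matrix.conjTranspose_apply, Matrix.neg_apply, Matrix.vecHead,
        Matrix.vecTail, diag_imag x hx.1]
  · have ht := hx.2
    rw [Matrix.trace_fin_three] at ht ⊢
    simp [dpart, Matrix.vecHead, Matrix.vecTail]
    linear_combination ht
  · intro i j hne
    fin_cases i <;> fin_cases j <;>
      simp_all [dpart, Matrix.vecHead, Matrix.vecTail]

lemma q1_in_V1 (x : M3) (hx : xᴴ = -x) : q1 x ∈ V1 := by
  refine ⟨(x 0 1).re, (x 0 1).im, ?_⟩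
  have hc : x 0 1 = ((x 0 1).re : ℂ) + ((x 0 1).im : ℂ) * Complex.I :=
    (Complex.re_add_im _).symm
  ext i j
  fin_cases i <;> fin_cases j <;>
    simp [q1, E, Matrix.single, Complex.real_smul, Matrix.vecHead,
      Matrix.vecTail, skew x hx 0 1] <;>
    rw [hc] <;> ring

lemma q2_in_V2 (x : M3) (hx : xᴴ = -x) : q2 x ∈ V2 := by
  refine ⟨(x 0 2).re, (x 0 2).im, ?_⟩
  have hc : x 0 2 = ((x 0 2).re : ℂ) + ((x 0 2).im : ℂ) * Complex.I :=
    (Complex.re_add_im _).symm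
  ext i j
  fin_cases i <;> fin_cases j <;>
    simp [q2, E, Matrix.single, Complex.real_smul, Matrix.vecHead,
      Matrix.vecTail, skew x hx 0 2] <;>
    rw [hc] <;> ring

lemma q3_in_V3 (x : M3) (hx : xᴴ = -x) : q3 x ∈ V3 := by
  refine ⟨(x 1 2).re, (x 1 2).im, ?_⟩
  have hc : x 1 2 = ((x 1 2).re : ℂ) + ((x 1 2).im : ℂ) * Complex.I :=
    (Complex.re_add_im _).symm
  ext i j
  fin_cases i <;> fin_cases j <;>
    simp [q3, E, Matrix.single, Complex.real_smul, Matrix.vecHead,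
      Matrix.vecTail, skew x hx 1 2] <;>
    rw [hc] <;> ring

lemma core1 (K : Set M3)
    (hadd : ∀ x ∈ K, ∀ y ∈ K, x + y ∈ K)
    (hsmul : ∀ (r : ℝ), ∀ x ∈ K, r • x ∈ K)
    (hbrk : ∀ x ∈ K, ∀ y ∈ K, x * y - y * x ∈ K)
    (hA : HH1 ∈ K) (hB : HH2 ∈ K) (hC : HH3 ∈ K)
    (x : M3) (hx : xᴴ = -x) (hxK : x ∈ K) (hne : x 0 1 ≠ 0) : u1 ∈ K ∧ w1 ∈ K := by
  set p := (x 0 1).re with hp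
  set q := (x 0 1).im with hq
  have hc : x 0 1 = (p : ℂ) + (q : ℂ) * Complex.I := (Complex.re_add_im _).symm
  have h10 : x 1 0 = -(p : ℂ) + (q : ℂ) * Complex.I := skew x hx 0 1
  have hq1K : q1 x ∈ K := by
    rw [extract1 x]
    have b1 : br HH1 (br HH1 x) ∈ K := hbrk _ hA _ (hbrk _ hA _ hxK)
    have b2 : br HH2 (br HH2 x) ∈ K := hbrk _ hB _ (hbrk _ hB _ hxK)
    have b3 : br HH3 (br HH3 x) ∈ K := hbrk _ hC _ (hbrk _ hC _ hxK)
    exact hadd _ (hsmul _ _ b1) _ (hsmul _ _ (hadd _ (hadd _ b1 _ b2) _ b3))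
  have hvK : br HH1 (q1 x) ∈ K := hbrk _ hA _ hq1K
  have hpq : (p ^ 2 + q ^ 2 : ℝ) ≠ 0 := by
    intro h0
    apply hne
    have hp0 : p = 0 := by nlinarith [sq_nonneg p, sq_nonneg q]
    have hq0 : q = 0 := by nlinarith [sq_nonneg p, sq_nonneg q]
    rw [hc, hp0, hq0]; simp
  have idA : (p : ℝ) • q1 x + (-(q / 2) : ℝ) • br HH1 (q1 x) = ((p ^ 2 + q ^ 2 : ℝ)) • u1 := by
    ext i j
    fin_cases i <;> fin_cases j <;>
      simp [q1, br, HH1, u1, E, Matrix.single, Matrix.mul_apply, Fin.sum_univ_three,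
        Complex.real_smul, Matrix.vecHead, Matrix.vecTail, Matrix.diagonal, hc, h10] <;>
      (try push_cast) <;> (try ring_nf) <;> (try simp [Complex.I_sq]) <;> (try ring)
  have idB : (q : ℝ) • q1 x + ((p / 2) : ℝ) • br HH1 (q1 x) = ((p ^ 2 + q ^ 2 : ℝ)) • w1 := by
    ext i j
    fin_cases i <;> fin_cases j <;>
      simp [q1, br, HH1, w1, E, Matrix.single, Matrix.mul_apply, Fin.sum_univ_three,
        Complex.real_smul, Matrix.vecHead, Matrix.vecTail, Matrix.diagonal, hc, h10] <;>
      (try push_cast) <;> (try ring_nf) <;> (try simp [Complex.I_sq]) <;> (try ring)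
  constructor
  · have hm := hadd _ (hsmul p _ hq1K) _ (hsmul (-(q / 2)) _ hvK)
    rw [idA] at hm
    have hm2 := hsmul ((p ^ 2 + q ^ 2)⁻¹) _ hm
    rwa [smul_smul, inv_mul_cancel₀ hpq, one_smul] at hm2
  · have hm := hadd _ (hsmul q _ hq1K) _ (hsmul (p / 2) _ hvK)
    rw [idB] at hm
    have hm2 := hsmul ((p ^ 2 + q ^ 2)⁻¹) _ hm
    rwa [smul_smul, inv_mul_cancel₀ hpq, one_smul] at hm2


lemma core2 (K : Set M3)
    (hadd : ∀ x ∈ K, ∀ y ∈ K, x + y ∈ K)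
    (hsmul : ∀ (r : ℝ), ∀ x ∈ K, r • x ∈ K)
    (hbrk : ∀ x ∈ K, ∀ y ∈ K, x * y - y * x ∈ K)
    (hA : HH1 ∈ K) (hB : HH2 ∈ K) (hC : HH3 ∈ K)
    (x : M3) (hx : xᴴ = -x) (hxK : x ∈ K) (hne : x 0 2 ≠ 0) : u2 ∈ K ∧ w2 ∈ K := by
  set p := (x 0 2).re with hp
  set q := (x 0 2).im with hq
  have hc : x 0 2 = (p : ℂ) + (q : ℂ) * Complex.I := (Complex.re_add_im _).symm
  have h10 : x 2 0 = -(p : ℂ) + (q : ℂ) * Complex.I := skew x hx 0 2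
  have hq2K : q2 x ∈ K := by
    rw [extract2 x]
    have b1 : br HH1 (br HH1 x) ∈ K := hbrk _ hA _ (hbrk _ hA _ hxK)
    have b2 : br HH2 (br HH2 x) ∈ K := hbrk _ hB _ (hbrk _ hB _ hxK)
    have b3 : br HH3 (br HH3 x) ∈ K := hbrk _ hC _ (hbrk _ hC _ hxK)
    exact hadd _ (hsmul _ _ b2) _ (hsmul _ _ (hadd _ (hadd _ b1 _ b2) _ b3))
  have hvK : br HH2 (q2 x) ∈ K := hbrk _ hB _ hq2K
  have hpq : (p ^ 2 + q ^ 2 : ℝ) ≠ 0 := by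
    intro h0
    apply hne
    have hp0 : p = 0 := by nlinarith [sq_nonneg p, sq_nonneg q]
    have hq0 : q = 0 := by nlinarith [sq_nonneg p, sq_nonneg q]
    rw [hc, hp0, hq0]; simp
  have idA : (p : ℝ) • q2 x + (-(q / 2) : ℝ) • br HH2 (q2 x) = ((p ^ 2 + q ^ 2 : ℝ)) • u2 := by
    ext i j
    fin_cases i <;> fin_cases j <;>
      simp [q2, br, HH2, u2, E, Matrix.single, Matrix.mul_apply, Fin.sum_univ_three,
        Complex.real_smul, Matrix.vecHead, Matrix.vecTail, Matrix.diagonal, hc, h10] <;>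
      (try push_cast) <;> (try ring_nf) <;> (try simp [Complex.I_sq]) <;> (try ring)
  have idB : (q : ℝ) • q2 x + ((p / 2) : ℝ) • br HH2 (q2 x) = ((p ^ 2 + q ^ 2 : ℝ)) • w2 := by
    ext i j
    fin_cases i <;> fin_cases j <;>
      simp [q2, br, HH2, w2, E, Matrix.single, Matrix.mul_apply, Fin.sum_univ_three,
        Complex.real_smul, Matrix.vecHead, Matrix.vecTail, Matrix.diagonal, hc, h10] <;>
      (try push_cast) <;> (try ring_nf) <;> (try simp [Complex.I_sq]) <;> (try ring)
  constructor
  · have hm := hadd _ (hsmul p _ hq2K) _ (hsmul (-(q / 2)) _ hvK)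
    rw [idA] at hm
    have hm2 := hsmul ((p ^ 2 + q ^ 2)⁻¹) _ hm
    rwa [smul_smul, inv_mul_cancel₀ hpq, one_smul] at hm2
  · have hm := hadd _ (hsmul q _ hq2K) _ (hsmul (p / 2) _ hvK)
    rw [idB] at hm
    have hm2 := hsmul ((p ^ 2 + q ^ 2)⁻¹) _ hm
    rwa [smul_smul, inv_mul_cancel₀ hpq, one_smul] at hm2


lemma core3 (K : Set M3)
    (hadd : ∀ x ∈ K, ∀ y ∈ K, x + y ∈ K)
    (hsmul : ∀ (r : ℝ), ∀ x ∈ K, r • x ∈ K)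
    (hbrk : ∀ x ∈ K, ∀ y ∈ K, x * y - y * x ∈ K)
    (hA : HH1 ∈ K) (hB : HH2 ∈ K) (hC : HH3 ∈ K)
    (x : M3) (hx : xᴴ = -x) (hxK : x ∈ K) (hne : x 1 2 ≠ 0) : u3 ∈ K ∧ w3 ∈ K := by
  set p := (x 1 2).re with hp
  set q := (x 1 2).im with hq
  have hc : x 1 2 = (p : ℂ) + (q : ℂ) * Complex.I := (Complex.re_add_im _).symm
  have h10 : x 2 1 = -(p : ℂ) + (q : ℂ) * Complex.I := skew x hx 1 2
  have hq3K : q3 x ∈ K := by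
    rw [extract3 x]
    have b1 : br HH1 (br HH1 x) ∈ K := hbrk _ hA _ (hbrk _ hA _ hxK)
    have b2 : br HH2 (br HH2 x) ∈ K := hbrk _ hB _ (hbrk _ hB _ hxK)
    have b3 : br HH3 (br HH3 x) ∈ K := hbrk _ hC _ (hbrk _ hC _ hxK)
    exact hadd _ (hsmul _ _ b3) _ (hsmul _ _ (hadd _ (hadd _ b1 _ b2) _ b3))
  have hvK : br HH3 (q3 x) ∈ K := hbrk _ hC _ hq3K
  have hpq : (p ^ 2 + q ^ 2 : ℝ) ≠ 0 := by
    intro h0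
    apply hne
    have hp0 : p = 0 := by nlinarith [sq_nonneg p, sq_nonneg q]
    have hq0 : q = 0 := by nlinarith [sq_nonneg p, sq_nonneg q]
    rw [hc, hp0, hq0]; simp
  have idA : (p : ℝ) • q3 x + (-(q / 2) : ℝ) • br HH3 (q3 x) = ((p ^ 2 + q ^ 2 : ℝ)) • u3 := by
    ext i j
    fin_cases i <;> fin_cases j <;>
      simp [q3, br, HH3, u3, E, Matrix.single, Matrix.mul_apply, Fin.sum_univ_three,
        Complex.real_smul, Matrix.vecHead, Matrix.vecTail, Matrix.diagonal, hc, h10] <;>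
      (try push_cast) <;> (try ring_nf) <;> (try simp [Complex.I_sq]) <;> (try ring)
  have idB : (q : ℝ) • q3 x + ((p / 2) : ℝ) • br HH3 (q3 x) = ((p ^ 2 + q ^ 2 : ℝ)) • w3 := by
    ext i j
    fin_cases i <;> fin_cases j <;>
      simp [q3, br, HH3, w3, E, Matrix.single, Matrix.mul_apply, Fin.sum_univ_three,
        Complex.real_smul, Matrix.vecHead, Matrix.vecTail, Matrix.diagonal, hc, h10] <;>
      (try push_cast) <;> (try ring_nf) <;> (try simp [Complex.I_sq]) <;> (try ring)
  constructor
  · have hm := hadd _ (hsmul p _ hq3K) _ (hsmul (-(q / 2)) _ hvK)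
    rw [idA] at hm
    have hm2 := hsmul ((p ^ 2 + q ^ 2)⁻¹) _ hm
    rwa [smul_smul, inv_mul_cancel₀ hpq, one_smul] at hm2
  · have hm := hadd _ (hsmul q _ hq3K) _ (hsmul (p / 2) _ hvK)
    rw [idB] at hm
    have hm2 := hsmul ((p ^ 2 + q ^ 2)⁻¹) _ hm
    rwa [smul_smul, inv_mul_cancel₀ hpq, one_smul] at hm2

/-- Every Lie subalgebra `K` of `su(3)` containing the diagonal Cartan subalgebra
`2u(1)` is either `2u(1)` itself, or `2u(1) ⊕ Vᵢ` for one of the three root spaces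
`V₁, V₂, V₃` (a subalgebra isomorphic to `u(2)`), or all of `su(3)`. -/
theorem subalgebras_containing_cartan (K : Set (Matrix (Fin 3) (Fin 3) ℂ))
    (hsub : K ⊆ su3)
    (h0 : (0 : Matrix (Fin 3) (Fin 3) ℂ) ∈ K)
    (hadd : ∀ x ∈ K, ∀ y ∈ K, x + y ∈ K)
    (hsmul : ∀ (r : ℝ), ∀ x ∈ K, r • x ∈ K)
    (hbrk : ∀ x ∈ K, ∀ y ∈ K, x * y - y * x ∈ K)
    (hdiag : diagCartan ⊆ K) :
    K = diagCartan ∨ K = sumSet diagCartan V1 ∨ K = sumSet diagCartan V2 ∨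
      K = sumSet diagCartan V3 ∨ K = su3 := by
  have hH1 : HH1 ∈ K := hdiag HH1_mem
  have hH2 : HH2 ∈ K := hdiag HH2_mem
  have hH3 : HH3 ∈ K := hdiag HH3_mem
  have span1 : u1 ∈ K → w1 ∈ K → V1 ⊆ K := by
    rintro hu hw v ⟨α, β, rfl⟩
    exact hadd _ (hsmul α _ hu) _ (hsmul β _ hw)
  have span2 : u2 ∈ K → w2 ∈ K → V2 ⊆ K := by
    rintro hu hw v ⟨α, β, rfl⟩
    exact hadd _ (hsmul α _ hu) _ (hsmul β _ hw)
  have span3 : u3 ∈ K → w3 ∈ K → V3 ⊆ K := by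
    rintro hu hw v ⟨α, β, rfl⟩
    exact hadd _ (hsmul α _ hu) _ (hsmul β _ hw)
  have mem1 : V1 ⊆ K → u1 ∈ K ∧ w1 ∈ K := fun h =>
    ⟨h ⟨1, 0, by simp [u1]⟩, h ⟨0, 1, by simp [w1]⟩⟩
  have mem2 : V2 ⊆ K → u2 ∈ K ∧ w2 ∈ K := fun h =>
    ⟨h ⟨1, 0, by simp [u2]⟩, h ⟨0, 1, by simp [w2]⟩⟩
  have mem3 : V3 ⊆ K → u3 ∈ K ∧ w3 ∈ K := fun h =>
    ⟨h ⟨1, 0, by simp [u3]⟩, h ⟨0, 1, by simp [w3]⟩⟩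
  have third12 : V1 ⊆ K → V2 ⊆ K → V3 ⊆ K := by
    intro hV1 hV2
    obtain ⟨hu1, hw1⟩ := mem1 hV1
    obtain ⟨hu2, hw2⟩ := mem2 hV2
    have hu3 : u3 ∈ K := by
      have h := hsmul (-1) _ (hbrk _ hu1 _ hu2); rwa [gen_u3] at h
    have hw3 : w3 ∈ K := by
      have h := hsmul (-1) _ (hbrk _ hu1 _ hw2); rwa [gen_w3] at h
    exact span3 hu3 hw3
  have third13 : V1 ⊆ K → V3 ⊆ K → V2 ⊆ K := by
    intro hV1 hV3
    obtain ⟨hu1, hw1⟩ := mem1 hV1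
    obtain ⟨hu3, hw3⟩ := mem3 hV3
    have hu2 : u2 ∈ K := by
      have h := hbrk _ hu1 _ hu3; rwa [gen_u2] at h
    have hw2 : w2 ∈ K := by
      have h := hbrk _ hu1 _ hw3; rwa [gen_w2] at h
    exact span2 hu2 hw2
  have third23 : V2 ⊆ K → V3 ⊆ K → V1 ⊆ K := by
    intro hV2 hV3
    obtain ⟨hu2, hw2⟩ := mem2 hV2
    obtain ⟨hu3, hw3⟩ := mem3 hV3
    have hu1 : u1 ∈ K := by
      have h := hsmul (-1) _ (hbrk _ hu2 _ hu3); rwa [gen_u1] at h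
    have hw1 : w1 ∈ K := by
      have h := hbrk _ hu2 _ hw3; rwa [gen_w1] at h
    exact span1 hu1 hw1
  have hsu3 : V1 ⊆ K → V2 ⊆ K → V3 ⊆ K → K = su3 := by
    intro h1 h2 h3
    refine Set.Subset.antisymm hsub fun x hx => ?_
    have hd := decomp x
    rw [hd]
    exact hadd _ (hadd _ (hadd _ (hdiag (dpart_mem x hx)) _ (h1 (q1_in_V1 x hx.1)))
      _ (h2 (q2_in_V2 x hx.1))) _ (h3 (q3_in_V3 x hx.1))
  have hzero1 : ¬ V1 ⊆ K → ∀ x ∈ K, q1 x = 0 := by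
    intro hn x hxK
    have hx := hsub hxK
    have h01 : x 0 1 = 0 := by
      by_contra hne
      obtain ⟨hu, hw⟩ := core1 K hadd hsmul hbrk hH1 hH2 hH3 x hx.1 hxK hne
      exact hn (span1 hu hw)
    have h10 : x 1 0 = 0 := by rw [skew x hx.1 0 1, h01]; simp
    ext i j
    fin_cases i <;> fin_cases j <;>
      simp [q1, Matrix.vecHead, Matrix.vecTail, h01, h10]
  have hzero2 : ¬ V2 ⊆ K → ∀ x ∈ K, q2 x = 0 := by
    intro hn x hxK
    have hx := hsub hxK
    have h01 : x 0 2 = 0 := by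
      by_contra hne
      obtain ⟨hu, hw⟩ := core2 K hadd hsmul hbrk hH1 hH2 hH3 x hx.1 hxK hne
      exact hn (span2 hu hw)
    have h10 : x 2 0 = 0 := by rw [skew x hx.1 0 2, h01]; simp
    ext i j
    fin_cases i <;> fin_cases j <;>
      simp [q2, Matrix.vecHead, Matrix.vecTail, h01, h10]
  have hzero3 : ¬ V3 ⊆ K → ∀ x ∈ K, q3 x = 0 := by
    intro hn x hxK
    have hx := hsub hxK
    have h01 : x 1 2 = 0 := by
      by_contra hne
      obtain ⟨hu, hw⟩ := core3 K hadd hsmul hbrk hH1 hH2 hH3 x hx.1 hxK hne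
      exact hn (span3 hu hw)
    have h10 : x 2 1 = 0 := by rw [skew x hx.1 1 2, h01]; simp
    ext i j
    fin_cases i <;> fin_cases j <;>
      simp [q3, Matrix.vecHead, Matrix.vecTail, h01, h10]
  by_cases hV1 : V1 ⊆ K <;> by_cases hV2 : V2 ⊆ K <;> by_cases hV3 : V3 ⊆ K
  · exact Or.inr (Or.inr (Or.inr (Or.inr (hsu3 hV1 hV2 hV3))))
  · exact absurd (third12 hV1 hV2) hV3
  · exact absurd (third13 hV1 hV3) hV2
  · -- only V1
    refine Or.inr (Or.inl (Set.Subset.antisymm (fun x hxK => ?_) ?_))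
    · have hx := hsub hxK
      refine ⟨dpart x, dpart_mem x hx, q1 x, q1_in_V1 x hx.1, ?_⟩
      conv_lhs => rw [decomp x]
      rw [hzero2 hV2 x hxK, hzero3 hV3 x hxK, add_zero, add_zero]
    · rintro x ⟨d, hd, v, hv, rfl⟩
      exact hadd _ (hdiag hd) _ (hV1 hv)
  · exact absurd (third23 hV2 hV3) hV1
  · -- only V2
    refine Or.inr (Or.inr (Or.inl (Set.Subset.antisymm (fun x hxK => ?_) ?_)))
    · have hx := hsub hxK
      refine ⟨dpart x, dpart_mem x hx, q2 x, q2_in_V2 x hx.1, ?_⟩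
      conv_lhs => rw [decomp x]
      rw [hzero1 hV1 x hxK, hzero3 hV3 x hxK, add_zero]
      abel
    · rintro x ⟨d, hd, v, hv, rfl⟩
      exact hadd _ (hdiag hd) _ (hV2 hv)
  · -- only V3
    refine Or.inr (Or.inr (Or.inr (Or.inl (Set.Subset.antisymm (fun x hxK => ?_) ?_))))
    · have hx := hsub hxK
      refine ⟨dpart x, dpart_mem x hx, q3 x, q3_in_V3 x hx.1, ?_⟩
      conv_lhs => rw [decomp x]
      rw [hzero1 hV1 x hxK, hzero2 hV2 x hxK, add_zero]
      abel
    · rintro x ⟨d, hd, v, hv, rfl⟩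
      exact hadd _ (hdiag hd) _ (hV3 hv)
  · -- none
    refine Or.inl (Set.Subset.antisymm (fun x hxK => ?_) hdiag)
    have hx := hsub hxK
    have hxd : x = dpart x := by
      conv_lhs => rw [decomp x]
      rw [hzero1 hV1 x hxK, hzero2 hV2 x hxK, hzero3 hV3 x hxK]
      simp
    rw [hxd]
    exact dpart_mem x hx


end Stmt15
end

section
/- There is no Lie subalgebra of su(3) isomorphic to su(2) ⊕ su(2). -/
open Matrix

local notation "M3" => Matrix (Fin 3) (Fin 3) ℂ

lemma cayley3 (A : M3) :
    (6:ℂ) • (A*A*A) = ((6:ℂ) * A.trace) • (A*A)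
      - ((3:ℂ)*(A.trace^2 - (A*A).trace)) • A
      + (A.trace^3 - 3*A.trace*(A*A).trace + 2*(A*A*A).trace) • (1 : M3) := by
  ext i j
  fin_cases i <;> fin_cases j <;>
    simp [Matrix.mul_apply, Matrix.trace, Fin.sum_univ_three, Matrix.one_apply] <;> ring

lemma trace_sq_eq_two (A : M3) (h3 : A*A*A = A) (ht : A.trace = 0) (hA : A ≠ 0) :
    (A*A).trace = 2 := by
  have hc := cayley3 A
  rw [h3, ht] at hc
  have key : ((A*A).trace - 2) • A = (0 : M3) := by
    have h6 : ((6:ℂ) • A : M3) = (3 * (A*A).trace) • A := by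
      rw [hc]; module
    have h2 : (((A*A).trace - 2) • ((3:ℂ) • A) : M3) = 0 := by
      rw [smul_comm]
      rw [show ((3:ℂ) • (((A*A).trace - 2) • A) : M3) = (3 * (A*A).trace) • A - (6:ℂ) • A by module]
      rw [← h6]; abel
    rw [smul_comm] at h2
    exact (smul_eq_zero.mp h2).resolve_left (by norm_num)
  rcases smul_eq_zero.mp key with h | h
  · linear_combination h
  · exact absurd h hA

lemma cube_eq_zero (H E : M3) (h : H*E - E*H = (2:ℂ) • E) : E*E*E = 0 := by
  have t1 : E.trace = 0 := by
    have h' := congrArg Matrix.trace h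
    simp [Matrix.trace_sub, Matrix.trace_smul, Matrix.trace_mul_comm H E] at h'
    exact h'
  have h2 : H*(E*E) - (E*E)*H = (4:ℂ) • (E*E) := by
    have e : H*(E*E) - (E*E)*H = (H*E - E*H)*E + E*(H*E - E*H) := by noncomm_ring
    rw [e, h]; simp only [smul_mul_assoc, mul_smul_comm]; module
  have t2 : (E*E).trace = 0 := by
    have h' := congrArg Matrix.trace h2
    simp [Matrix.trace_sub, Matrix.trace_smul, Matrix.trace_mul_comm H (E*E)] at h'
    exact h'
  have h3 : H*(E*E*E) - (E*E*E)*H = (6:ℂ) • (E*E*E) := by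
    have e : H*(E*E*E) - (E*E*E)*H = (H*(E*E) - (E*E)*H)*E + (E*E)*(H*E - E*H) := by
      noncomm_ring
    rw [e, h, h2]; simp only [smul_mul_assoc, mul_smul_comm]; module
  have t3 : (E*E*E).trace = 0 := by
    have h' := congrArg Matrix.trace h3
    simp [Matrix.trace_sub, Matrix.trace_smul, Matrix.trace_mul_comm H (E*E*E)] at h'
    exact h'
  have hc := cayley3 E
  rw [t1, t2, t3] at hc
  have : (6:ℂ) • (E*E*E) = (0 : M3) := by rw [hc]; module
  exact (smul_eq_zero.mp this).resolve_left (by norm_num)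



lemma poly_of_comm (E A : M3) (hE3 : E*E*E = 0) (hE2 : E*E ≠ 0)
    (hA : A*E = E*A) : ∃ a b c : ℂ, A = a•(1:M3) + b•E + c•(E*E) := by
  obtain ⟨v, hv⟩ : ∃ v : Fin 3 → ℂ, (E*E).mulVec v ≠ 0 := by
    by_contra hall
    push_neg at hall
    apply hE2
    ext i j
    have := congrFun (hall (Pi.single j 1)) i
    simpa [Matrix.mulVec_single] using this
  have hE3' : E*(E*E) = 0 := by rw [← mul_assoc]; exact hE3
  have hE3'' : (E*E)*E = 0 := by rw [mul_assoc]; exact hE3'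
  have hE4 : (E*E)*(E*E) = 0 := by rw [← mul_assoc, hE3'']; simp
  have li : LinearIndependent ℂ ![v, E.mulVec v, (E*E).mulVec v] := by
    rw [Fintype.linearIndependent_iff]
    intro g hgg
    rw [Fin.sum_univ_three] at hgg
    have hg : g 0 • v + g 1 • E.mulVec v + g 2 • (E*E).mulVec v = 0 := hgg
    have h0 : g 0 = 0 := by
      have h := congrArg (fun x => (E*E).mulVec x) hg
      simp only [Matrix.mulVec_add, Matrix.mulVec_smul, Matrix.mulVec_mulVec,
        Matrix.mulVec_zero, hE3, hE4, Matrix.zero_mulVec, smul_zero, add_zero] at h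
      exact (smul_eq_zero.mp h).resolve_right hv
    have h1 : g 1 = 0 := by
      have h := congrArg (fun x => E.mulVec x) hg
      simp only [Matrix.mulVec_add, Matrix.mulVec_smul, Matrix.mulVec_mulVec,
        Matrix.mulVec_zero, h0, zero_smul, zero_add, hE3', Matrix.zero_mulVec,
        smul_zero, add_zero] at h
      exact (smul_eq_zero.mp h).resolve_right hv
    have h2 : g 2 = 0 := by
      rw [h0, h1] at hg
      simp only [zero_smul, zero_add] at hg
      exact (smul_eq_zero.mp hg).resolve_right hv
    intro i; fin_cases i <;> assumption
  have hcard : Fintype.card (Fin 3) = Module.finrank ℂ (Fin 3 → ℂ) := by simp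
  let b : Module.Basis (Fin 3) ℂ (Fin 3 → ℂ) := basisOfLinearIndependentOfCardEqFinrank li hcard
  have hb : ∀ i, b i = ![v, E.mulVec v, (E*E).mulVec v] i := fun i =>
    congrFun (coe_basisOfLinearIndependentOfCardEqFinrank li hcard) i
  set a0 := b.repr (A.mulVec v) 0
  set a1 := b.repr (A.mulVec v) 1
  set a2 := b.repr (A.mulVec v) 2
  have hrepr : A.mulVec v = a0 • v + a1 • E.mulVec v + a2 • (E*E).mulVec v := by
    conv_lhs => rw [← b.sum_repr (A.mulVec v)]
    rw [Fin.sum_univ_three, hb 0, hb 1, hb 2]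
    rfl
  set P : M3 := a0•(1:M3) + a1•E + a2•(E*E) with hP
  have expand : ∀ u, P.mulVec u = a0 • u + a1 • E.mulVec u + a2 • (E*E).mulVec u := by
    intro u
    simp [hP, Matrix.add_mulVec, Matrix.smul_mulVec]
  have hAE2 : A*(E*E) = (E*E)*A := by
    calc A*(E*E) = (A*E)*E := (mul_assoc _ _ _).symm
    _ = (E*A)*E := by rw [hA]
    _ = E*(A*E) := mul_assoc _ _ _
    _ = E*(E*A) := by rw [hA]
    _ = (E*E)*A := (mul_assoc _ _ _).symm
  have k0 : Matrix.toLin' A v = Matrix.toLin' P v := by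
    simp only [Matrix.toLin'_apply]
    rw [expand]; exact hrepr
  have k1 : Matrix.toLin' A (E.mulVec v) = Matrix.toLin' P (E.mulVec v) := by
    simp only [Matrix.toLin'_apply]
    rw [expand, Matrix.mulVec_mulVec, hA, ← Matrix.mulVec_mulVec, hrepr]
    simp only [Matrix.mulVec_add, Matrix.mulVec_smul, Matrix.mulVec_mulVec,
      hE3', hE3'', Matrix.zero_mulVec, smul_zero, add_zero]
  have k2 : Matrix.toLin' A ((E*E).mulVec v) = Matrix.toLin' P ((E*E).mulVec v) := by
    simp only [Matrix.toLin'_apply]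
    rw [expand, Matrix.mulVec_mulVec, hAE2, ← Matrix.mulVec_mulVec, hrepr]
    simp only [Matrix.mulVec_add, Matrix.mulVec_smul, Matrix.mulVec_mulVec,
      hE3', hE3'', hE4, Matrix.zero_mulVec, smul_zero, add_zero]
  refine ⟨a0, a1, a2, ?_⟩
  have heq : Matrix.toLin' A = Matrix.toLin' P := by
    apply b.ext
    intro i
    rw [hb i]
    fin_cases i
    · exact k0
    · exact k1
    · exact k2
  exact Matrix.toLin'.injective heq

lemma centralizer_comm (E A B : M3) (hE3 : E*E*E = 0) (hE2 : E*E ≠ 0)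
    (hA : A*E = E*A) (hB : B*E = E*B) : A*B = B*A := by
  obtain ⟨a0,a1,a2,ha⟩ := poly_of_comm E A hE3 hE2 hA
  obtain ⟨b0,b1,b2,hb⟩ := poly_of_comm E B hE3 hE2 hB
  subst ha hb
  simp only [add_mul, mul_add, smul_mul_assoc, mul_smul_comm, one_mul, mul_one, mul_assoc]
  module

/-- In an sl2-triple with E² = 0 we get H³ = H (and intermediate identities). -/
lemma sl2_cube (H E F : M3) (hHE : H*E - E*H = (2:ℂ)•E) (hHF : H*F - F*H = (-2:ℂ)•F)
    (hEF : E*F - F*E = H) (hE2 : E*E = 0) : H*H*H = H := by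
  -- anti-commutation
  have anti : H*E + E*H = 0 := by
    have e : (F*E - E*F)*E + E*(F*E - E*F) = F*(E*E) - (E*E)*F := by noncomm_ring
    rw [hE2] at e
    have hFE : F*E - E*F = -H := by rw [← hEF]; noncomm_ring
    rw [hFE] at e
    simp only [mul_zero, zero_mul, sub_zero] at e
    have : -(H*E) + -(E*H) = 0 := by
      rw [show -(H*E) = (-H)*E by noncomm_ring, show -(E*H) = E*(-H) by noncomm_ring, e]
    linear_combination (norm := module) -this
  have hHEe : H*E = E := by
    have h2 : (2:ℂ)•(H*E) = (2:ℂ)•E := by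
      rw [show ((2:ℂ)•(H*E) : M3) = (H*E - E*H) + (H*E + E*H) by module, hHE, anti, add_zero]
    exact smul_right_injective _ (by norm_num : (2:ℂ) ≠ 0) h2
  have hEH : E*H = -E := by
    have h2 : (2:ℂ)•(E*H) = (2:ℂ)•(-E) := by
      rw [show ((2:ℂ)•(E*H) : M3) = (H*E + E*H) - (H*E - E*H) by module, hHE, anti]
      module
    exact smul_right_injective _ (by norm_num : (2:ℂ) ≠ 0) h2
  have hFH : F*H = H*F + (2:ℂ)•F := by
    rw [sub_eq_iff_eq_add] at hHF
    rw [hHF]; module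
  have hH2 : H*H = E*F + F*E := by
    have e1 : (E*F - F*E)*H = E*(F*H) - F*(E*H) := by noncomm_ring
    rw [hEF] at e1
    rw [e1, hFH, hEH]
    have e2 : E*(H*F + (2:ℂ)•F) = (E*H)*F + (2:ℂ)•(E*F) := by
      simp only [mul_add, mul_smul_comm, mul_assoc]
    rw [e2, hEH]
    simp only [neg_mul, mul_neg]
    module
  have e3 : (E*F + F*E)*H = E*(F*H) + F*(E*H) := by noncomm_ring
  calc H*H*H = (E*F + F*E)*H := by rw [hH2]
  _ = E*(F*H) + F*(E*H) := e3
  _ = E*(H*F + (2:ℂ)•F) + F*(-E) := by rw [hFH, hEH]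
  _ = (E*H)*F + (2:ℂ)•(E*F) + F*(-E) := by
      simp only [mul_add, mul_smul_comm, mul_assoc]
  _ = (-E)*F + (2:ℂ)•(E*F) + F*(-E) := by rw [hEH]
  _ = E*F - F*E := by simp only [neg_mul, mul_neg]; module
  _ = H := hEF

/-- trace of Z·[X,Y] vanishes when Z commutes with X -/
lemma trace_mul_comm_zero (Z X Y : M3) (h1 : Z*X = X*Z) :
    (Z*(X*Y - Y*X)).trace = 0 := by
  rw [mul_sub, Matrix.trace_sub]
  have e : (Z*(Y*X)).trace = (Z*(X*Y)).trace := by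
    calc (Z*(Y*X)).trace = ((Z*Y)*X).trace := by rw [mul_assoc]
    _ = (X*(Z*Y)).trace := by rw [Matrix.trace_mul_comm]
    _ = ((X*Z)*Y).trace := by rw [mul_assoc]
    _ = ((Z*X)*Y).trace := by rw [h1]
    _ = (Z*(X*Y)).trace := by rw [mul_assoc]
  rw [e, sub_self]

/-- key cube identity for a sum of commuting elements with the right traces -/
lemma cube_two (H K : M3) (c : K*H = H*K) (hH3 : H*H*H = H) (hK3 : K*K*K = K)
    (tH : H.trace = 0) (tK : K.trace = 0)
    (tH2 : (H*H).trace = 2) (tK2 : (K*K).trace = 2)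
    (tHK : (H*K).trace = 0) (tH2K : (H*(H*K)).trace = 0) (tHK2 : (H*(K*K)).trace = 0) :
    (H+K)*(H+K)*(H+K) = (2:ℂ)•(H+K) := by
  have sort : ∀ X : M3, K*(H*X) = H*(K*X) := by
    intro X
    calc K*(H*X) = (K*H)*X := by rw [mul_assoc]
    _ = (H*K)*X := by rw [c]
    _ = H*(K*X) := by rw [mul_assoc]
  have sq : (H+K)*(H+K) = H*H + (2:ℂ)•(H*K) + K*K := by
    have e : (H+K)*(H+K) = H*H + H*K + K*H + K*K := by noncomm_ring
    rw [e, c]; module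
  have cube : (H+K)*(H+K)*(H+K)
      = H*(H*H) + (3:ℂ)•(H*(H*K)) + (3:ℂ)•(H*(K*K)) + K*(K*K) := by
    simp only [add_mul, mul_add, mul_assoc, sort, c]
    module
  have tA : (H+K).trace = 0 := by rw [Matrix.trace_add, tH, tK, add_zero]
  have tA2 : ((H+K)*(H+K)).trace = 4 := by
    rw [sq, Matrix.trace_add, Matrix.trace_add, Matrix.trace_smul, tH2, tK2, tHK]
    norm_num
  have tA3 : ((H+K)*(H+K)*(H+K)).trace = 0 := by
    rw [cube, Matrix.trace_add, Matrix.trace_add, Matrix.trace_add,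
      Matrix.trace_smul, Matrix.trace_smul]
    rw [show (H*(H*H)).trace = H.trace by rw [← mul_assoc, hH3],
      show (K*(K*K)).trace = K.trace by rw [← mul_assoc, hK3], tH, tK, tH2K, tHK2]
    simp
  have hc := cayley3 (H+K)
  rw [tA, tA2, tA3] at hc
  have h6 : (6:ℂ)•((H+K)*(H+K)*(H+K)) = (6:ℂ)•((2:ℂ)•(H+K)) := by
    rw [hc]; match_scalars <;> norm_num
  exact smul_right_injective _ (by norm_num : (6:ℂ) ≠ 0) h6

lemma main_abstract (X1 X2 X3 Y1 Y2 Y3 : M3)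
    (c12 : X1*X2 - X2*X1 = (-2:ℂ)•X3)
    (c23 : X2*X3 - X3*X2 = (-2:ℂ)•X1)
    (c31 : X3*X1 - X1*X3 = (-2:ℂ)•X2)
    (d12 : Y1*Y2 - Y2*Y1 = (-2:ℂ)•Y3)
    (d23 : Y2*Y3 - Y3*Y2 = (-2:ℂ)•Y1)
    (d31 : Y3*Y1 - Y1*Y3 = (-2:ℂ)•Y2)
    (q11 : X1*Y1 = Y1*X1) (q12 : X1*Y2 = Y2*X1) (q13 : X1*Y3 = Y3*X1)
    (q21 : X2*Y1 = Y1*X2) (q22 : X2*Y2 = Y2*X2) (q23 : X2*Y3 = Y3*X2)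
    (q31 : X3*Y1 = Y1*X3) (q32 : X3*Y2 = Y2*X3) (q33 : X3*Y3 = Y3*X3)
    (hX3 : X3 ≠ 0) (hY3 : Y3 ≠ 0) : False := by
  set H : M3 := Complex.I • X3 with hH
  set E : M3 := (2⁻¹:ℂ) • X1 - (Complex.I * 2⁻¹) • X2 with hE
  set F : M3 := -((2⁻¹:ℂ) • X1) - (Complex.I * 2⁻¹) • X2 with hF
  set K : M3 := Complex.I • Y3 with hK
  set E' : M3 := (2⁻¹:ℂ) • Y1 - (Complex.I * 2⁻¹) • Y2 with hE'
  set F' : M3 := -((2⁻¹:ℂ) • Y1) - (Complex.I * 2⁻¹) • Y2 with hF'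
  have r21 : X2*X1 = X1*X2 + (2:ℂ)•X3 := by
    rw [sub_eq_iff_eq_add] at c12; rw [c12]; module
  have r32 : X3*X2 = X2*X3 + (2:ℂ)•X1 := by
    rw [sub_eq_iff_eq_add] at c23; rw [c23]; module
  have r13 : X1*X3 = X3*X1 + (2:ℂ)•X2 := by
    rw [sub_eq_iff_eq_add] at c31; rw [c31]; module
  have s21 : Y2*Y1 = Y1*Y2 + (2:ℂ)•Y3 := by
    rw [sub_eq_iff_eq_add] at d12; rw [d12]; module
  have s32 : Y3*Y2 = Y2*Y3 + (2:ℂ)•Y1 := by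
    rw [sub_eq_iff_eq_add] at d23; rw [d23]; module
  have s13 : Y1*Y3 = Y3*Y1 + (2:ℂ)•Y2 := by
    rw [sub_eq_iff_eq_add] at d31; rw [d31]; module
  have hHE : H*E - E*H = (2:ℂ)•E := by
    rw [hH, hE]
    simp only [smul_mul_assoc, mul_smul_comm, mul_sub, sub_mul, smul_sub, smul_smul]
    rw [r13, r32]
    match_scalars <;> ring_nf <;> simp [Complex.I_sq]
  have hHF : H*F - F*H = (-2:ℂ)•F := by
    rw [hH, hF]
    simp only [smul_mul_assoc, mul_smul_comm, mul_sub, sub_mul, smul_sub, smul_smul,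
      neg_smul, neg_mul, mul_neg, smul_neg, sub_neg_eq_add, neg_neg]
    rw [r13, r32]
    match_scalars <;> ring_nf <;> simp [Complex.I_sq]
  have hEF : E*F - F*E = H := by
    rw [hH, hE, hF]
    simp only [smul_mul_assoc, mul_smul_comm, mul_sub, sub_mul, smul_sub, smul_smul,
      neg_smul, neg_mul, mul_neg, smul_neg, sub_neg_eq_add, neg_neg]
    rw [r21]
    match_scalars <;> ring_nf <;> simp [Complex.I_sq]
  have hKE' : K*E' - E'*K = (2:ℂ)•E' := by
    rw [hK, hE']
    simp only [smul_mul_assoc, mul_smul_comm, mul_sub, sub_mul, smul_sub, smul_smul]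
    rw [s13, s32]
    match_scalars <;> ring_nf <;> simp [Complex.I_sq]
  have hKF' : K*F' - F'*K = (-2:ℂ)•F' := by
    rw [hK, hF']
    simp only [smul_mul_assoc, mul_smul_comm, mul_sub, sub_mul, smul_sub, smul_smul,
      neg_smul, neg_mul, mul_neg, smul_neg, sub_neg_eq_add, neg_neg]
    rw [s13, s32]
    match_scalars <;> ring_nf <;> simp [Complex.I_sq]
  have hE'F' : E'*F' - F'*E' = K := by
    rw [hK, hE', hF']
    simp only [smul_mul_assoc, mul_smul_comm, mul_sub, sub_mul, smul_sub, smul_smul,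
      neg_smul, neg_mul, mul_neg, smul_neg, sub_neg_eq_add, neg_neg]
    rw [s21]
    match_scalars <;> ring_nf <;> simp [Complex.I_sq]
  -- cross commutations
  have cHK : K*H = H*K := by
    rw [hH, hK]
    simp only [smul_mul_assoc, mul_smul_comm, q33, smul_smul]
  have cHE' : H*E' = E'*H := by
    rw [hH, hE']
    simp only [smul_mul_assoc, mul_smul_comm, mul_sub, sub_mul, smul_sub, smul_smul,
      q31, q32]
    module
  have cHF' : H*F' = F'*H := by
    rw [hH, hF']
    simp only [smul_mul_assoc, mul_smul_comm, mul_sub, sub_mul, mul_add, add_mul,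
      smul_sub, smul_add, smul_smul, neg_smul, neg_mul, mul_neg, smul_neg, q31, q32]
    module
  have cKE : K*E = E*K := by
    rw [hK, hE]
    simp only [smul_mul_assoc, mul_smul_comm, mul_sub, sub_mul, smul_sub, smul_smul,
      q13, q23]
    module
  have cKF : K*F = F*K := by
    rw [hK, hF]
    simp only [smul_mul_assoc, mul_smul_comm, mul_sub, sub_mul, mul_add, add_mul,
      smul_sub, smul_add, smul_smul, neg_smul, neg_mul, mul_neg, smul_neg, q13, q23]
    module
  have cEE' : E*E' = E'*E := by
    rw [hE, hE']
    simp only [smul_mul_assoc, mul_smul_comm, mul_sub, sub_mul, smul_sub, smul_smul,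
      q11, q12, q21, q22]
    module
  have hHne : H ≠ 0 := by
    rw [hH]
    simp only [ne_eq, smul_eq_zero, Complex.I_ne_zero, false_or]
    exact hX3
  have hKne : K ≠ 0 := by
    rw [hK]
    simp only [ne_eq, smul_eq_zero, Complex.I_ne_zero, false_or]
    exact hY3
  have hEne : E ≠ 0 := by
    intro h
    apply hHne
    rw [← hEF, h]
    simp
  have hE'ne : E' ≠ 0 := by
    intro h
    apply hKne
    rw [← hE'F', h]
    simp
  -- case analysis
  by_cases hE2 : E*E = 0
  · by_cases hE2' : E'*E' = 0
    · -- both rank one : the trace argument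
      have hH3 : H*H*H = H := sl2_cube H E F hHE hHF hEF hE2
      have hK3 : K*K*K = K := sl2_cube K E' F' hKE' hKF' hE'F' hE2'
      have tH : H.trace = 0 := by
        rw [← hEF, Matrix.trace_sub, Matrix.trace_mul_comm, sub_self]
      have tK : K.trace = 0 := by
        rw [← hE'F', Matrix.trace_sub, Matrix.trace_mul_comm, sub_self]
      have tH2 : (H*H).trace = 2 := trace_sq_eq_two H hH3 tH hHne
      have tK2 : (K*K).trace = 2 := trace_sq_eq_two K hK3 tK hKne
      have tHK : (H*K).trace = 0 := by
        rw [← hE'F']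
        exact trace_mul_comm_zero H E' F' cHE'
      have tH2K : (H*(H*K)).trace = 0 := by
        rw [← mul_assoc, ← hE'F']
        have cH2E' : (H*H)*E' = E'*(H*H) := by
          calc (H*H)*E' = H*(H*E') := mul_assoc _ _ _
          _ = H*(E'*H) := by rw [cHE']
          _ = (H*E')*H := (mul_assoc _ _ _).symm
          _ = (E'*H)*H := by rw [cHE']
          _ = E'*(H*H) := mul_assoc _ _ _
        exact trace_mul_comm_zero (H*H) E' F' cH2E'
      have tHK2 : (H*(K*K)).trace = 0 := by
        rw [Matrix.trace_mul_comm, ← hEF]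
        have cK2E : (K*K)*E = E*(K*K) := by
          calc (K*K)*E = K*(K*E) := mul_assoc _ _ _
          _ = K*(E*K) := by rw [cKE]
          _ = (K*E)*K := (mul_assoc _ _ _).symm
          _ = (E*K)*K := by rw [cKE]
          _ = E*(K*K) := mul_assoc _ _ _
        exact trace_mul_comm_zero (K*K) E F cK2E
      -- A = H + K and B = H - K both cube to 2× themselves
      have hA3 : (H+K)*(H+K)*(H+K) = (2:ℂ)•(H+K) :=
        cube_two H K cHK hH3 hK3 tH tK tH2 tK2 tHK tH2K tHK2
      have hB3 : (H+(-K))*(H+(-K))*(H+(-K)) = (2:ℂ)•(H+(-K)) := by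
        apply cube_two H (-K)
        · simp only [neg_mul, mul_neg, cHK]
        · exact hH3
        · simp only [neg_mul, mul_neg, neg_neg, hK3]
        · exact tH
        · rw [Matrix.trace_neg, tK, neg_zero]
        · exact tH2
        · rw [neg_mul_neg, tK2]
        · rw [mul_neg, Matrix.trace_neg, tHK, neg_zero]
        · rw [mul_neg, mul_neg, Matrix.trace_neg, tH2K, neg_zero]
        · rw [neg_mul_neg, tHK2]
      -- difference gives 6•H²K + 2•K³ = 4•K
      have sort : ∀ X : M3, K*(H*X) = H*(K*X) := by
        intro X
        calc K*(H*X) = (K*H)*X := by rw [mul_assoc]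
        _ = (H*K)*X := by rw [cHK]
        _ = H*(K*X) := by rw [mul_assoc]
      have diff : (6:ℂ)•(H*(H*K)) + (2:ℂ)•(K*(K*K))
          = (H+K)*(H+K)*(H+K) - (H+(-K))*(H+(-K))*(H+(-K)) := by
        simp only [add_mul, mul_add, mul_neg, neg_mul, neg_neg, mul_assoc, sort, cHK]
        module
      rw [hA3, hB3] at diff
      have diff2 : (6:ℂ)•(H*(H*K)) + (2:ℂ)•(K*(K*K)) = (4:ℂ)•K := by
        rw [diff]; module
      rw [show K*(K*K) = K from by rw [← mul_assoc]; exact hK3] at diff2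
      -- so 3•H²K = K
      have h3H2K : (3:ℂ)•(H*(H*K)) = K := by
        have : (2:ℂ)•((3:ℂ)•(H*(H*K))) = (2:ℂ)•K := by
          rw [smul_smul]
          have : ((6:ℂ)•(H*(H*K)) : M3) = (4:ℂ)•K - (2:ℂ)•K := by
            rw [← diff2]; module
          rw [show ((2:ℂ)*3 : ℂ) = 6 by norm_num, this]; module
        exact smul_right_injective _ (by norm_num : (2:ℂ) ≠ 0) this
      -- multiply by H on the left : 3•H³K = H•K, i.e. 3•(H*K) = H*K
      have hHK0 : H*K = 0 := by
        have e1 : H*((3:ℂ)•(H*(H*K))) = H*K := by rw [h3H2K]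
        have e2 : H*((3:ℂ)•(H*(H*K))) = (3:ℂ)•(H*K) := by
          rw [mul_smul_comm]
          congr 1
          calc H*(H*(H*K)) = ((H*H)*H)*K := by simp only [mul_assoc]
          _ = H*K := by rw [hH3]
        have : (3:ℂ)•(H*K) = H*K := by rw [← e2, e1]
        have h2 : (2:ℂ)•(H*K) = ((0:ℂ))•(H*K) := by
          rw [show ((2:ℂ)•(H*K) : M3) = (3:ℂ)•(H*K) - H*K by module, this]
          module
        have := smul_right_injective _ (by norm_num : (2:ℂ) ≠ 0)
          (h2.trans (by module : ((0:ℂ))•(H*K) = (2:ℂ)•(0:M3)))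
        exact this
      apply hKne
      rw [← h3H2K, hHK0]
      simp
    · -- E'² ≠ 0 : centralizer of E' is commutative
      have hE'3 : E'*E'*E' = 0 := cube_eq_zero K E' hKE'
      have comm : H*E = E*H := centralizer_comm E' H E hE'3 hE2' cHE' cEE'
      have : (2:ℂ)•E = 0 := by rw [← hHE, comm, sub_self]
      exact hEne (smul_right_injective _ (by norm_num : (2:ℂ) ≠ 0)
        (this.trans (by simp : (0:M3) = (2:ℂ)•(0:M3))))
  · -- E² ≠ 0 : centralizer of E is commutative
    have hE3 : E*E*E = 0 := cube_eq_zero H E hHE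
    have comm : K*E' = E'*K := centralizer_comm E K E' hE3 hE2 cKE cEE'.symm
    have : (2:ℂ)•E' = 0 := by rw [← hKE', comm, sub_self]
    exact hE'ne (smul_right_injective _ (by norm_num : (2:ℂ) ≠ 0)
      (this.trans (by simp : (0:M3) = (2:ℂ)•(0:M3))))

local notation "M2" => Matrix (Fin 2) (Fin 2) ℂ

/-- There is no Lie subalgebra of `su(3)` isomorphic to `su(2) ⊕ su(2)`:
there is no injective real-linear map from `su(2) ⊕ su(2)` to `3 × 3` matrices that
lands in `su(3)` and preserves the Lie bracket (commutator) on `su(2) ⊕ su(2)`. -/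
theorem no_su2_plus_su2_in_su3 :
    ¬ ∃ φ : (Matrix (Fin 2) (Fin 2) ℂ × Matrix (Fin 2) (Fin 2) ℂ) →ₗ[ℝ]
        Matrix (Fin 3) (Fin 3) ℂ,
      (∀ p : Matrix (Fin 2) (Fin 2) ℂ × Matrix (Fin 2) (Fin 2) ℂ,
        (p.1ᴴ = -p.1 ∧ p.1.trace = 0) → (p.2ᴴ = -p.2 ∧ p.2.trace = 0) →
          (φ p)ᴴ = -(φ p) ∧ (φ p).trace = 0) ∧
      (∀ p q : Matrix (Fin 2) (Fin 2) ℂ × Matrix (Fin 2) (Fin 2) ℂ,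
        (p.1ᴴ = -p.1 ∧ p.1.trace = 0) → (p.2ᴴ = -p.2 ∧ p.2.trace = 0) →
        (q.1ᴴ = -q.1 ∧ q.1.trace = 0) → (q.2ᴴ = -q.2 ∧ q.2.trace = 0) →
          φ (p.1 * q.1 - q.1 * p.1, p.2 * q.2 - q.2 * p.2) =
            φ p * φ q - φ q * φ p) ∧
      (∀ p : Matrix (Fin 2) (Fin 2) ℂ × Matrix (Fin 2) (Fin 2) ℂ,
        (p.1ᴴ = -p.1 ∧ p.1.trace = 0) → (p.2ᴴ = -p.2 ∧ p.2.trace = 0) →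
          φ p = 0 → p = 0) := by
  rintro ⟨φ, hsu, hbr, hinj⟩
  clear hsu
  set e1 : M2 := !![0, Complex.I; Complex.I, 0] with he1
  set e2 : M2 := !![0, 1; -1, 0] with he2
  set e3 : M2 := !![Complex.I, 0; 0, -Complex.I] with he3
  have m1 : e1ᴴ = -e1 ∧ e1.trace = 0 := by
    constructor
    · ext i j
      fin_cases i <;> fin_cases j <;>
        simp [he1, Matrix.conjTranspose_apply, Complex.conj_I]
    · simp [he1, Matrix.trace_fin_two]
  have m2 : e2ᴴ = -e2 ∧ e2.trace = 0 := by
    constructor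
    · ext i j
      fin_cases i <;> fin_cases j <;>
        simp [he2, Matrix.conjTranspose_apply]
    · simp [he2, Matrix.trace_fin_two]
  have m3 : e3ᴴ = -e3 ∧ e3.trace = 0 := by
    constructor
    · ext i j
      fin_cases i <;> fin_cases j <;>
        simp [he3, Matrix.conjTranspose_apply, Complex.conj_I]
    · simp [he3, Matrix.trace_fin_two]
  have m0 : ((0:M2))ᴴ = -(0:M2) ∧ (0:M2).trace = 0 := by simp
  -- the images
  set X1 : M3 := φ (e1, 0) with hX1
  set X2 : M3 := φ (e2, 0) with hX2
  set X3 : M3 := φ (e3, 0) with hX3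
  set Y1 : M3 := φ (0, e1) with hY1
  set Y2 : M3 := φ (0, e2) with hY2
  set Y3 : M3 := φ (0, e3) with hY3
  -- real smul to complex smul conversion
  have rsmul : ∀ (r : ℝ) (A : M3), r • A = (r : ℂ) • A := by
    intro r A
    ext i j
    simp [Matrix.smul_apply, Complex.real_smul]
  -- the three X-commutators
  have pair12 : (e1*e2 - e2*e1, (0:M2)*0 - 0*0) = (-2:ℝ) • ((e3, 0) : M2 × M2) := by
    have : e1*e2 - e2*e1 = (-2:ℝ) • e3 := by
      ext i j
      fin_cases i <;> fin_cases j <;>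
        simp [he1, he2, he3, Matrix.mul_apply, Fin.sum_univ_two, Complex.real_smul] <;>
        ring
    rw [Prod.smul_mk]
    exact Prod.ext this (by simp)
  have pair23 : (e2*e3 - e3*e2, (0:M2)*0 - 0*0) = (-2:ℝ) • ((e1, 0) : M2 × M2) := by
    have : e2*e3 - e3*e2 = (-2:ℝ) • e1 := by
      ext i j
      fin_cases i <;> fin_cases j <;>
        simp [he1, he2, he3, Matrix.mul_apply, Fin.sum_univ_two, Complex.real_smul] <;>
        ring
    rw [Prod.smul_mk]
    exact Prod.ext this (by simp)
  have pair31 : (e3*e1 - e1*e3, (0:M2)*0 - 0*0) = (-2:ℝ) • ((e2, 0) : M2 × M2) := by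
    have : e3*e1 - e1*e3 = (-2:ℝ) • e2 := by
      ext i j
      fin_cases i <;> fin_cases j <;>
        simp [he1, he2, he3, Matrix.mul_apply, Fin.sum_univ_two, Complex.real_smul] <;>
        ring
    rw [Prod.smul_mk]
    exact Prod.ext this (by simp)
  have c12 : X1*X2 - X2*X1 = (-2:ℂ)•X3 := by
    have hb := hbr (e1, 0) (e2, 0) m1 m0 m2 m0
    simp only at hb
    rw [pair12, φ.map_smul, ← hX3, rsmul] at hb
    rw [← hb]; norm_num
  have c23 : X2*X3 - X3*X2 = (-2:ℂ)•X1 := by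
    have hb := hbr (e2, 0) (e3, 0) m2 m0 m3 m0
    simp only at hb
    rw [pair23, φ.map_smul, ← hX1, rsmul] at hb
    rw [← hb]; norm_num
  have c31 : X3*X1 - X1*X3 = (-2:ℂ)•X2 := by
    have hb := hbr (e3, 0) (e1, 0) m3 m0 m1 m0
    simp only at hb
    rw [pair31, φ.map_smul, ← hX2, rsmul] at hb
    rw [← hb]; norm_num
  -- the three Y-commutators
  have pair12' : ((0:M2)*0 - 0*0, e1*e2 - e2*e1) = (-2:ℝ) • (((0:M2), e3) : M2 × M2) := by
    have : e1*e2 - e2*e1 = (-2:ℝ) • e3 := by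
      ext i j
      fin_cases i <;> fin_cases j <;>
        simp [he1, he2, he3, Matrix.mul_apply, Fin.sum_univ_two, Complex.real_smul] <;>
        ring
    rw [Prod.smul_mk]
    exact Prod.ext (by simp) this
  have pair23' : ((0:M2)*0 - 0*0, e2*e3 - e3*e2) = (-2:ℝ) • (((0:M2), e1) : M2 × M2) := by
    have : e2*e3 - e3*e2 = (-2:ℝ) • e1 := by
      ext i j
      fin_cases i <;> fin_cases j <;>
        simp [he1, he2, he3, Matrix.mul_apply, Fin.sum_univ_two, Complex.real_smul] <;>
        ring
    rw [Prod.smul_mk]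
    exact Prod.ext (by simp) this
  have pair31' : ((0:M2)*0 - 0*0, e3*e1 - e1*e3) = (-2:ℝ) • (((0:M2), e2) : M2 × M2) := by
    have : e3*e1 - e1*e3 = (-2:ℝ) • e2 := by
      ext i j
      fin_cases i <;> fin_cases j <;>
        simp [he1, he2, he3, Matrix.mul_apply, Fin.sum_univ_two, Complex.real_smul] <;>
        ring
    rw [Prod.smul_mk]
    exact Prod.ext (by simp) this
  have d12 : Y1*Y2 - Y2*Y1 = (-2:ℂ)•Y3 := by
    have hb := hbr (0, e1) (0, e2) m0 m1 m0 m2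
    simp only at hb
    rw [pair12', φ.map_smul, ← hY3, rsmul] at hb
    rw [← hb]; norm_num
  have d23 : Y2*Y3 - Y3*Y2 = (-2:ℂ)•Y1 := by
    have hb := hbr (0, e2) (0, e3) m0 m2 m0 m3
    simp only at hb
    rw [pair23', φ.map_smul, ← hY1, rsmul] at hb
    rw [← hb]; norm_num
  have d31 : Y3*Y1 - Y1*Y3 = (-2:ℂ)•Y2 := by
    have hb := hbr (0, e3) (0, e1) m0 m3 m0 m1
    simp only at hb
    rw [pair31', φ.map_smul, ← hY2, rsmul] at hb
    rw [← hb]; norm_num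
  -- cross commutations
  have cross : ∀ (a b : M2), (aᴴ = -a ∧ a.trace = 0) → (bᴴ = -b ∧ b.trace = 0) →
      φ (a, 0) * φ (0, b) = φ (0, b) * φ (a, 0) := by
    intro a b ma mb
    have hb := hbr (a, 0) (0, b) ma m0 m0 mb
    simp only [mul_zero, zero_mul, sub_zero, sub_self] at hb
    have h0 : φ ((0 : M2), (0 : M2)) = 0 := by
      have : ((0 : M2), (0 : M2)) = (0 : M2 × M2) := rfl
      rw [this, map_zero]
    rw [h0] at hb
    have := sub_eq_zero.mp hb.symm
    exact this
  have q11 := cross e1 e1 m1 m1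
  have q12 := cross e1 e2 m1 m2
  have q13 := cross e1 e3 m1 m3
  have q21 := cross e2 e1 m2 m1
  have q22 := cross e2 e2 m2 m2
  have q23 := cross e2 e3 m2 m3
  have q31 := cross e3 e1 m3 m1
  have q32 := cross e3 e2 m3 m2
  have q33 := cross e3 e3 m3 m3
  -- nonvanishing
  have hX3ne : X3 ≠ 0 := by
    intro h
    have := hinj (e3, 0) m3 m0 (by rw [← hX3]; exact h)
    have he : e3 = 0 := congrArg Prod.fst this
    have := congrFun (congrFun he 0) 0
    simp [he3] at this
  have hY3ne : Y3 ≠ 0 := by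
    intro h
    have := hinj (0, e3) m0 m3 (by rw [← hY3]; exact h)
    have he : e3 = 0 := congrArg Prod.snd this
    have := congrFun (congrFun he 0) 0
    simp [he3] at this
  exact main_abstract X1 X2 X3 Y1 Y2 Y3 c12 c23 c31 d12 d23 d31
    q11 q12 q13 q21 q22 q23 q31 q32 q33 hX3ne hY3ne
end
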